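/- arXiv:2401.01198 — 2 statements merged into one kernel-verified Lean document; each statement's English description precedes it below -/
import Mathlib

section
/- (Three-point lemma.) Let (A, ρ_A) be a separable metric space, let 𝔠 be a convex subset of the space P(A) of Borel probability measures on A, let h : 𝔠 → ℝ be convex with flat derivative δh/δm, let ν ∈ 𝔠, and let G : 𝔠 → ℝ be convex with flat derivative δG/δm. Suppose m̄ ∈ 𝔠 minimises m ↦ G(m) + D_h(m|ν) over 𝔠. Then for all m' ∈ 𝔠: G(m') + D_h(m'|ν) ≥ G(m̄) + D_h(m'|m̄) + D_h(m̄|ν). -/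
open MeasureTheory Filter Topology

/-- The convex combination `m + ε (m' − m) = (1−ε)·m + ε·m'` of two measures. -/
noncomputable def comb {A : Type*} [MeasurableSpace A] (ε : ℝ) (m m' : Measure A) : Measure A :=
  ENNReal.ofReal (1 - ε) • m + ENNReal.ofReal ε • m'

/-- The integral `∫ φ d(m' − m) := ∫ φ dm' − ∫ φ dm`. -/
noncomputable def intDiff {A : Type*} [MeasurableSpace A] (φ : A → ℝ) (m' m : Measure A) : ℝ :=
  (∫ a, φ a ∂m') - ∫ a, φ a ∂m

/-- The Bregman divergence `D_h(m'|m)` associated with `h` and its flat derivative `D`. -/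
noncomputable def bregman {A : Type*} [MeasurableSpace A] (h : Measure A → ℝ)
    (D : Measure A → A → ℝ) (m' m : Measure A) : ℝ :=
  h m' - h m - intDiff (D m) m' m

/-! Along the segment `ε ↦ m̄ + ε (m' − m̄)` the functional `F(m) = G(m) + D_h(m|ν)` has right
derivative `∫ (δG/δm(m̄) + δh/δm(m̄) − δh/δm(ν)) d(m' − m̄)` at `ε = 0`, which is nonnegative
because `m̄` minimises `F`. Convexity of `G` bounds the first term by `G(m') − G(m̄)`, and the
remaining two terms are exactly `D_h(m'|ν) − D_h(m'|m̄) − D_h(m̄|ν)`. -/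

lemma le_sub_of_tendsto_slope_of_le_chord {φ : ℝ → ℝ} {x y L : ℝ}
    (hconv : ∀ᶠ ε in 𝓝[>] 0, φ ε ≤ (1 - ε) * x + ε * y)
    (hlim : Tendsto (fun ε => (φ ε - x) / ε) (𝓝[>] 0) (𝓝 L)) :
    L ≤ y - x := by
  refine le_of_tendsto hlim ?_
  filter_upwards [hconv, self_mem_nhdsWithin] with ε hε (hε0 : 0 < ε)
  rw [div_le_iff₀ hε0]
  linarith

lemma nonneg_of_tendsto_slope_of_le {φ : ℝ → ℝ} {x L : ℝ}
    (hmin : ∀ᶠ ε in 𝓝[>] 0, x ≤ φ ε)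
    (hlim : Tendsto (fun ε => (φ ε - x) / ε) (𝓝[>] 0) (𝓝 L)) :
    0 ≤ L := by
  refine ge_of_tendsto hlim ?_
  filter_upwards [hmin, self_mem_nhdsWithin] with ε hε (hε0 : 0 < ε)
  exact div_nonneg (sub_nonneg.2 hε) hε0.le

lemma eventually_mem_Icc_nhdsGT_zero : ∀ᶠ ε in 𝓝[>] (0 : ℝ), ε ∈ Set.Icc (0 : ℝ) 1 :=
  mem_of_superset (Ioc_mem_nhdsGT zero_lt_one) Set.Ioc_subset_Icc_self

section

variable {A : Type*} [MeasurableSpace A]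

lemma integral_comb_sub {φ : A → ℝ} {m m' : Measure A} {ε : ℝ} (hε : ε ∈ Set.Icc (0 : ℝ) 1)
    (hm : Integrable φ m) (hm' : Integrable φ m') :
    ∫ a, φ a ∂(comb ε m m') - ∫ a, φ a ∂m = ε * intDiff φ m' m := by
  rw [comb, integral_add_measure (hm.smul_measure ENNReal.ofReal_ne_top)
      (hm'.smul_measure ENNReal.ofReal_ne_top), integral_smul_measure, integral_smul_measure,
    ENNReal.toReal_ofReal (by linarith [hε.2]), ENNReal.toReal_ofReal hε.1, intDiff,
    smul_eq_mul, smul_eq_mul]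
  ring

/-- Since `m ↦ ∫ δh/δm(ν) dm` is affine, the slope of `m ↦ D_h(m|ν)` along a segment is that of
`h` minus a constant. -/
lemma tendsto_slope_bregman_comb {h : Measure A → ℝ} {D : Measure A → A → ℝ}
    {m m' ν : Measure A} (hm : Integrable (D ν) m) (hm' : Integrable (D ν) m')
    (hlim : Tendsto (fun ε : ℝ => (h (comb ε m m') - h m) / ε) (𝓝[>] 0)
      (𝓝 (intDiff (D m) m' m))) :
    Tendsto (fun ε : ℝ => (bregman h D (comb ε m m') ν - bregman h D m ν) / ε) (𝓝[>] 0)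
      (𝓝 (intDiff (D m) m' m - intDiff (D ν) m' m)) := by
  refine (hlim.sub_const _).congr' ?_
  filter_upwards [eventually_mem_Icc_nhdsGT_zero, self_mem_nhdsWithin] with ε hε (hε0 : 0 < ε)
  have hlin := integral_comb_sub hε hm hm'
  simp only [bregman, intDiff] at hlin ⊢
  field_simp
  linarith

lemma bregman_three_point (h : Measure A → ℝ) (D : Measure A → A → ℝ) (m m' ν : Measure A) :
    bregman h D m' ν - bregman h D m' m - bregman h D m ν =
      intDiff (D m) m' m - intDiff (D ν) m' m := by
  simp only [bregman, intDiff]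
  ring

end

theorem stmt6_general {A : Type*}
    [MeasurableSpace A]
    (C : Set (Measure A))
    (hCconv : ∀ m ∈ C, ∀ m' ∈ C, ∀ ε ∈ Set.Icc (0 : ℝ) 1, comb ε m m' ∈ C)
    (h : Measure A → ℝ)
    (Dh : Measure A → A → ℝ)
    (hint : ∀ m ∈ C, ∀ m' ∈ C, Integrable (Dh m) m')
    (hlim : ∀ m ∈ C, ∀ m' ∈ C,
      Tendsto (fun ε : ℝ => (h (comb ε m m') - h m) / ε) (𝓝[>] (0 : ℝ))
        (𝓝 (intDiff (Dh m) m' m)))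
    (G : Measure A → ℝ)
    (Gconv : ∀ m ∈ C, ∀ m' ∈ C, ∀ ε ∈ Set.Icc (0 : ℝ) 1,
      G (comb ε m m') ≤ (1 - ε) * G m + ε * G m')
    (DG : Measure A → A → ℝ)
    (Glim : ∀ m ∈ C, ∀ m' ∈ C,
      Tendsto (fun ε : ℝ => (G (comb ε m m') - G m) / ε) (𝓝[>] (0 : ℝ))
        (𝓝 (intDiff (DG m) m' m)))
    (ν : Measure A) (hν : ν ∈ C)
    (mbar : Measure A) (hmbar : mbar ∈ C)
    (hmin : ∀ m ∈ C, G mbar + bregman h Dh mbar ν ≤ G m + bregman h Dh m ν) :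
    ∀ m' ∈ C,
      G mbar + bregman h Dh m' mbar + bregman h Dh mbar ν ≤
        G m' + bregman h Dh m' ν := by
  intro m' hm'
  have hG : intDiff (DG mbar) m' mbar ≤ G m' - G mbar :=
    le_sub_of_tendsto_slope_of_le_chord
      (eventually_mem_Icc_nhdsGT_zero.mono fun ε hε => Gconv mbar hmbar m' hm' ε hε)
      (Glim mbar hmbar m' hm')
  have hslope := (Glim mbar hmbar m' hm').add <|
    tendsto_slope_bregman_comb (hint ν hν mbar hmbar) (hint ν hν m' hm') (hlim mbar hmbar m' hm')
  simp only [← add_div] at hslope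
  have hopt := nonneg_of_tendsto_slope_of_le
    (φ := fun ε => G (comb ε mbar m') + bregman h Dh (comb ε mbar m') ν)
    (eventually_mem_Icc_nhdsGT_zero.mono fun ε hε => hmin _ (hCconv mbar hmbar m' hm' ε hε))
    (hslope.congr fun ε => by ring_nf)
  linarith [bregman_three_point h Dh mbar m' ν]

/-- Three-point lemma: if `m̄` minimises `m ↦ G(m) + D_h(m|ν)` over `𝔠`, then
`G(m') + D_h(m'|ν) ≥ G(m̄) + D_h(m'|m̄) + D_h(m̄|ν)` for all `m' ∈ 𝔠`. -/
theorem stmt6 {A : Type*} [MetricSpace A] [TopologicalSpace.SeparableSpace A]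
    [MeasurableSpace A] [BorelSpace A]
    (C : Set (Measure A))
    (hprob : ∀ m ∈ C, IsProbabilityMeasure m)
    (hCconv : ∀ m ∈ C, ∀ m' ∈ C, ∀ ε ∈ Set.Icc (0 : ℝ) 1, comb ε m m' ∈ C)
    (h : Measure A → ℝ)
    (hconv : ∀ m ∈ C, ∀ m' ∈ C, ∀ ε ∈ Set.Icc (0 : ℝ) 1,
      h (comb ε m m') ≤ (1 - ε) * h m + ε * h m')
    (Dh : Measure A → A → ℝ)
    (hmeas : Measurable (Function.uncurry Dh))
    (hint : ∀ m ∈ C, ∀ m' ∈ C, Integrable (Dh m) m')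
    (hlim : ∀ m ∈ C, ∀ m' ∈ C,
      Tendsto (fun ε : ℝ => (h (comb ε m m') - h m) / ε) (𝓝[>] (0 : ℝ))
        (𝓝 (intDiff (Dh m) m' m)))
    (hzero : ∀ m ∈ C, ∫ a, Dh m a ∂m = 0)
    (G : Measure A → ℝ)
    (Gconv : ∀ m ∈ C, ∀ m' ∈ C, ∀ ε ∈ Set.Icc (0 : ℝ) 1,
      G (comb ε m m') ≤ (1 - ε) * G m + ε * G m')
    (DG : Measure A → A → ℝ)
    (Gmeas : Measurable (Function.uncurry DG))
    (Gint : ∀ m ∈ C, ∀ m' ∈ C, Integrable (DG m) m')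
    (Glim : ∀ m ∈ C, ∀ m' ∈ C,
      Tendsto (fun ε : ℝ => (G (comb ε m m') - G m) / ε) (𝓝[>] (0 : ℝ))
        (𝓝 (intDiff (DG m) m' m)))
    (Gzero : ∀ m ∈ C, ∫ a, DG m a ∂m = 0)
    (ν : Measure A) (hν : ν ∈ C)
    (mbar : Measure A) (hmbar : mbar ∈ C)
    (hmin : ∀ m ∈ C, G mbar + bregman h Dh mbar ν ≤ G m + bregman h Dh m ν) :
    ∀ m' ∈ C,
      G mbar + bregman h Dh m' mbar + bregman h Dh mbar ν ≤
        G m' + bregman h Dh m' ν :=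
  stmt6_general C hCconv h Dh hint hlim G Gconv DG Glim ν hν mbar hmbar hmin
end

section
/- Let (A, ρ_A) be a separable metric space, let 𝔠 be a convex subset of the space P(A) of Borel probability measures on A, and let f : 𝔠 → ℝ^d admit a flat derivative δf/δm. Fix m, m' ∈ 𝔠 and set m^ε := (1−ε)·m + ε·m' for ε ∈ [0,1]. Then the map [0,1] ∋ ε ↦ f(m^ε) is continuous on [0,1] and differentiable on (0,1) with derivative (d/dε) f(m^ε) = ∫ δf/δm(m^ε, a) d(m'−m)(a); moreover, if ε ↦ ∫ δf/δm(m^ε, a) d(m'−m)(a) is integrable over (0,1), then f(m') − f(m) = ∫₀¹ ∫ δf/δm(m^ε, a) d(m'−m)(a) dε. -/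
/-!
For `0 < ε < 1`, the segment `t ↦ m^t` restricted to `[ε, 1]` is the segment from `m^ε` to `m'`
reparametrised affinely, and restricted to `[0, ε]` it is the segment from `m^ε` to `m` run
backwards. So both one-sided derivatives of `t ↦ f (m^t)` at `ε` are directional derivatives of
`f` at `m^ε`, given by the flat derivative. As `m^ε` is linear in `ε`,
`∫ δf/δm(m^ε,·) d(m' − m^ε) = (1 − ε) ∫ δf/δm(m^ε,·) d(m' − m)` and
`∫ δf/δm(m^ε,·) d(m − m^ε) = −ε ∫ δf/δm(m^ε,·) d(m' − m)`, so the two one-sided derivatives agree.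
The one-sided derivatives at the endpoints give continuity on `[0, 1]`, and the fundamental
theorem of calculus for right derivatives gives the integral formula.
-/

open MeasureTheory Filter Topology

/-- The (vector-valued) integral `∫ φ d(m' − m) := ∫ φ dm' − ∫ φ dm`. -/
noncomputable def intDiffV {A : Type*} [MeasurableSpace A] {d : ℕ}
    (φ : A → (Fin d → ℝ)) (m' m : Measure A) : Fin d → ℝ :=
  (∫ a, φ a ∂m') - ∫ a, φ a ∂m

lemma continuousOn_Icc_of_continuousWithinAt_Ici_Iic {α β : Type*} [LinearOrder α]
    [TopologicalSpace α] [TopologicalSpace β] {g : α → β} {a b : α}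
    (hright : ∀ x ∈ Set.Ico a b, ContinuousWithinAt g (Set.Ici x) x)
    (hleft : ∀ x ∈ Set.Ioc a b, ContinuousWithinAt g (Set.Iic x) x) :
    ContinuousOn g (Set.Icc a b) := by
  intro x ⟨hax, hxb⟩
  rw [← Set.Icc_union_Icc_eq_Icc hax hxb]
  refine ContinuousWithinAt.union ?_ ?_
  · rcases hax.eq_or_lt with rfl | hax
    · simp [continuousWithinAt_singleton]
    · exact (hleft x ⟨hax, hxb⟩).mono Set.Icc_subset_Iic_self
  · rcases hxb.eq_or_lt with rfl | hxb
    · simp [continuousWithinAt_singleton]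
    · exact (hright x ⟨hax, hxb⟩).mono Set.Icc_subset_Ici_self

lemma hasDerivWithinAt_Ioi_zero_of_tendsto {E : Type*} [NormedAddCommGroup E] [NormedSpace ℝ E]
    {g : ℝ → E} {L : E}
    (h : Tendsto (fun s : ℝ => s⁻¹ • (g s - g 0)) (𝓝[>] 0) (𝓝 L)) :
    HasDerivWithinAt g L (Set.Ioi 0) 0 := by
  rw [hasDerivWithinAt_iff_tendsto_slope' Set.self_notMem_Ioi]
  simpa only [slope_fun_def, vsub_eq_sub, sub_zero] using h

section Comb

variable {A : Type*} [MeasurableSpace A] {m m' : Measure A} {ε s : ℝ}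

@[simp]
lemma comb_zero (m m' : Measure A) : comb 0 m m' = m := by
  simp [comb]

@[simp]
lemma comb_one (m m' : Measure A) : comb 1 m m' = m' := by
  simp [comb]

lemma comb_comb_right (hε : ε ∈ Set.Icc 0 1) (hs : s ∈ Set.Icc 0 1) :
    comb s (comb ε m m') m' = comb (ε + s * (1 - ε)) m m' := by
  obtain ⟨hε0, hε1⟩ := hε
  obtain ⟨hs0, hs1⟩ := hs
  unfold comb
  rw [smul_add, smul_smul, smul_smul, add_assoc, ← add_smul,
    ← ENNReal.ofReal_mul (by linarith), ← ENNReal.ofReal_mul (by linarith),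
    ← ENNReal.ofReal_add (by nlinarith) hs0]
  congr 3 <;> ring

lemma comb_comb_left (hε : ε ∈ Set.Icc 0 1) (hs : s ∈ Set.Icc 0 1) :
    comb s (comb ε m m') m = comb ((1 - s) * ε) m m' := by
  obtain ⟨hε0, hε1⟩ := hε
  obtain ⟨hs0, hs1⟩ := hs
  unfold comb
  rw [smul_add, smul_smul, smul_smul, add_right_comm, ← add_smul,
    ← ENNReal.ofReal_mul (by linarith), ← ENNReal.ofReal_mul (by linarith),
    ← ENNReal.ofReal_add (by nlinarith) hs0]
  congr 3
  ring

lemma integral_comb {E : Type*} [NormedAddCommGroup E] [NormedSpace ℝ E] {g : A → E}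
    (hm : Integrable g m) (hm' : Integrable g m') (hε : ε ∈ Set.Icc 0 1) :
    ∫ a, g a ∂(comb ε m m') = (1 - ε) • (∫ a, g a ∂m) + ε • ∫ a, g a ∂m' := by
  rw [comb, integral_add_measure (hm.smul_measure ENNReal.ofReal_ne_top)
      (hm'.smul_measure ENNReal.ofReal_ne_top),
    integral_smul_measure, integral_smul_measure, ENNReal.toReal_ofReal (by linarith [hε.2]),
    ENNReal.toReal_ofReal hε.1]

variable {d : ℕ} {φ : A → Fin d → ℝ}

lemma intDiffV_comb_right (hm : Integrable φ m) (hm' : Integrable φ m') (hε : ε ∈ Set.Icc 0 1) :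
    intDiffV φ m' (comb ε m m') = (1 - ε) • intDiffV φ m' m := by
  rw [intDiffV, intDiffV, integral_comb hm hm' hε]
  module

lemma intDiffV_comb_left (hm : Integrable φ m) (hm' : Integrable φ m') (hε : ε ∈ Set.Icc 0 1) :
    intDiffV φ m (comb ε m m') = (-ε) • intDiffV φ m' m := by
  rw [intDiffV, intDiffV, integral_comb hm hm' hε]
  module

end Comb

section Segment

variable {A E : Type*} [MeasurableSpace A] [NormedAddCommGroup E] [NormedSpace ℝ E]
  (f : Measure A → E) {m m' : Measure A} {ε : ℝ} {L : E}

lemma hasDerivWithinAt_comb_Ioi (hε : ε ∈ Set.Ico 0 1)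
    (h : HasDerivWithinAt (fun s => f (comb s (comb ε m m') m')) ((1 - ε) • L) (Set.Ioi 0) 0) :
    HasDerivWithinAt (fun t => f (comb t m m')) L (Set.Ioi ε) ε := by
  obtain ⟨hε0, hε1⟩ := hε
  have hpos : 0 < 1 - ε := by linarith
  have hrepar : HasDerivWithinAt (fun t => (t - ε) / (1 - ε)) (1 - ε)⁻¹ (Set.Ioi ε) ε := by
    simpa using (((hasDerivAt_id ε).sub_const ε).div_const (1 - ε)).hasDerivWithinAt
  have hmaps : Set.MapsTo (fun t => (t - ε) / (1 - ε)) (Set.Ioi ε) (Set.Ioi 0) :=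
    fun t ht => div_pos (sub_pos.2 ht) hpos
  have hcomp := h.scomp_of_eq ε hrepar hmaps (by simp)
  rw [inv_smul_smul₀ hpos.ne'] at hcomp
  refine hcomp.congr_of_eventuallyEq ?_ (by simp)
  filter_upwards [Ioo_mem_nhdsGT hε1] with t ⟨hεt, ht1⟩
  have hs : (t - ε) / (1 - ε) ∈ Set.Icc 0 1 :=
    ⟨div_nonneg (by linarith) hpos.le, (div_le_one hpos).2 (by linarith)⟩
  rw [Function.comp_apply, comb_comb_right ⟨hε0, hε1.le⟩ hs]
  congr 2
  field_simp
  ring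

lemma hasDerivWithinAt_comb_Iio (hε : ε ∈ Set.Ioc 0 1)
    (h : HasDerivWithinAt (fun s => f (comb s (comb ε m m') m)) ((-ε) • L) (Set.Ioi 0) 0) :
    HasDerivWithinAt (fun t => f (comb t m m')) L (Set.Iio ε) ε := by
  obtain ⟨hε0, hε1⟩ := hε
  have hrepar : HasDerivWithinAt (fun t => (ε - t) / ε) (-ε)⁻¹ (Set.Iio ε) ε := by
    simpa [neg_div, inv_neg] using
      (((hasDerivAt_id ε).const_sub ε).div_const ε).hasDerivWithinAt (s := Set.Iio ε)
  have hmaps : Set.MapsTo (fun t => (ε - t) / ε) (Set.Iio ε) (Set.Ioi 0) :=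
    fun t ht => div_pos (sub_pos.2 ht) hε0
  have hcomp := h.scomp_of_eq ε hrepar hmaps (by simp)
  rw [inv_smul_smul₀ (neg_ne_zero.2 hε0.ne')] at hcomp
  refine hcomp.congr_of_eventuallyEq ?_ (by simp)
  filter_upwards [Ioo_mem_nhdsLT hε0] with t ⟨ht0, htε⟩
  have hs : (ε - t) / ε ∈ Set.Icc 0 1 :=
    ⟨div_nonneg (by linarith) hε0.le, (div_le_one hε0).2 (by linarith)⟩
  rw [Function.comp_apply, comb_comb_left ⟨hε0.le, hε1⟩ hs]
  congr 2
  field_simp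
  ring

end Segment

theorem stmt7_general {A : Type*}
    [MeasurableSpace A] {d : ℕ}
    (C : Set (Measure A))
    (hCconv : ∀ m ∈ C, ∀ m' ∈ C, ∀ ε ∈ Set.Icc (0 : ℝ) 1, comb ε m m' ∈ C)
    (f : Measure A → (Fin d → ℝ))
    (Df : Measure A → A → (Fin d → ℝ))
    (hint : ∀ m ∈ C, ∀ m' ∈ C, Integrable (Df m) m')
    (hlim : ∀ m ∈ C, ∀ m' ∈ C,
      Tendsto (fun ε : ℝ => ε⁻¹ • (f (comb ε m m') - f m)) (𝓝[>] (0 : ℝ))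
        (𝓝 (intDiffV (Df m) m' m)))
    (m : Measure A) (hm : m ∈ C) (m' : Measure A) (hm' : m' ∈ C) :
    ContinuousOn (fun ε : ℝ => f (comb ε m m')) (Set.Icc 0 1) ∧
    (∀ ε ∈ Set.Ioo (0 : ℝ) 1,
      HasDerivAt (fun t : ℝ => f (comb t m m'))
        (intDiffV (Df (comb ε m m')) m' m) ε) ∧
    (IntervalIntegrable (fun ε : ℝ => intDiffV (Df (comb ε m m')) m' m)
        MeasureTheory.volume 0 1 →
      f m' - f m = ∫ ε in (0 : ℝ)..1, intDiffV (Df (comb ε m m')) m' m) := by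
  have hdir : ∀ p ∈ C, ∀ q ∈ C, HasDerivWithinAt (fun s => f (comb s p q))
      (intDiffV (Df p) q p) (Set.Ioi 0) 0 := fun p hp q hq =>
    hasDerivWithinAt_Ioi_zero_of_tendsto (by simpa only [comb_zero] using hlim p hp q hq)
  have hright : ∀ ε ∈ Set.Ico (0 : ℝ) 1, HasDerivWithinAt (fun t => f (comb t m m'))
      (intDiffV (Df (comb ε m m')) m' m) (Set.Ioi ε) ε := by
    intro ε hε
    have hμ := hCconv m hm m' hm' ε (Set.Ico_subset_Icc_self hε)
    refine hasDerivWithinAt_comb_Ioi f hε ?_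
    rw [← intDiffV_comb_right (hint _ hμ m hm) (hint _ hμ m' hm') (Set.Ico_subset_Icc_self hε)]
    exact hdir _ hμ m' hm'
  have hleft : ∀ ε ∈ Set.Ioc (0 : ℝ) 1, HasDerivWithinAt (fun t => f (comb t m m'))
      (intDiffV (Df (comb ε m m')) m' m) (Set.Iio ε) ε := by
    intro ε hε
    have hμ := hCconv m hm m' hm' ε (Set.Ioc_subset_Icc_self hε)
    refine hasDerivWithinAt_comb_Iio f hε ?_
    rw [← intDiffV_comb_left (hint _ hμ m hm) (hint _ hμ m' hm') (Set.Ioc_subset_Icc_self hε)]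
    exact hdir _ hμ m hm
  have hcont : ContinuousOn (fun ε : ℝ => f (comb ε m m')) (Set.Icc 0 1) :=
    continuousOn_Icc_of_continuousWithinAt_Ici_Iic
      (fun x hx => (hright x hx).Ici_of_Ioi.continuousWithinAt)
      (fun x hx => (hleft x hx).Iic_of_Iio.continuousWithinAt)
  refine ⟨hcont, fun ε hε => ?_, fun hii => ?_⟩
  · refine ((hleft ε (Set.Ioo_subset_Ioc_self hε)).Iic_of_Iio.union
      (hright ε (Set.Ioo_subset_Ico_self hε)).Ici_of_Ioi).hasDerivAt ?_
    simp
  · simpa using (intervalIntegral.integral_eq_sub_of_hasDeriv_right_of_le zero_le_one hcont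
      (fun x hx => hright x (Set.Ioo_subset_Ico_self hx)) hii).symm

/-- If `f : 𝔠 → ℝ^d` admits a flat derivative, then `ε ↦ f(m^ε)` is continuous on `[0,1]`,
differentiable on `(0,1)` with derivative `∫ δf/δm(m^ε,·) d(m'−m)`, and (under an
integrability assumption) the fundamental theorem of calculus
`f(m') − f(m) = ∫₀¹ ∫ δf/δm(m^ε,a) d(m'−m)(a) dε` holds. -/
theorem stmt7 {A : Type*} [MetricSpace A] [TopologicalSpace.SeparableSpace A]
    [MeasurableSpace A] [BorelSpace A] {d : ℕ}
    (C : Set (Measure A))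
    (hprob : ∀ m ∈ C, IsProbabilityMeasure m)
    (hCconv : ∀ m ∈ C, ∀ m' ∈ C, ∀ ε ∈ Set.Icc (0 : ℝ) 1, comb ε m m' ∈ C)
    (f : Measure A → (Fin d → ℝ))
    (Df : Measure A → A → (Fin d → ℝ))
    (hmeas : Measurable (Function.uncurry Df))
    (hint : ∀ m ∈ C, ∀ m' ∈ C, Integrable (Df m) m')
    (hlim : ∀ m ∈ C, ∀ m' ∈ C,
      Tendsto (fun ε : ℝ => ε⁻¹ • (f (comb ε m m') - f m)) (𝓝[>] (0 : ℝ))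
        (𝓝 (intDiffV (Df m) m' m)))
    (hzero : ∀ m ∈ C, ∫ a, Df m a ∂m = 0)
    (m : Measure A) (hm : m ∈ C) (m' : Measure A) (hm' : m' ∈ C) :
    ContinuousOn (fun ε : ℝ => f (comb ε m m')) (Set.Icc 0 1) ∧
    (∀ ε ∈ Set.Ioo (0 : ℝ) 1,
      HasDerivAt (fun t : ℝ => f (comb t m m'))
        (intDiffV (Df (comb ε m m')) m' m) ε) ∧
    (IntervalIntegrable (fun ε : ℝ => intDiffV (Df (comb ε m m')) m' m)
        MeasureTheory.volume 0 1 →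
      f m' - f m = ∫ ε in (0 : ℝ)..1, intDiffV (Df (comb ε m m')) m' m) :=
  stmt7_general C hCconv f Df hint hlim m hm m' hm'
end
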